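/- Let f be a symmetric crossing submodular function on V with |V| ≥ 2 and let I be a nontrivial hereditary family (V ∉ I) containing at least one nonempty set. Then the number of minimal optimal solutions of the hereditary minimization problem is at most |V|. -/

import Mathlib

/-!
Two distinct minimal optimal solutions `X`, `Y` cannot meet. Neither contains the other, by
minimality. If `X ∪ Y ≠ V`, crossing submodularity applied to `X` and `V \ Y`, combined with
symmetry, gives `f (X \ Y) + f (Y \ X) ≤ f X + f Y`, which forces `f (X \ Y) = f X`; if
`X ∪ Y = V`, then `V \ X` is a proper subset of `Y` with `f (V \ X) = f X = f Y`. Either way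
minimality is violated. Pairwise disjoint nonempty subsets of `V` number at most `|V|`.
-/

section

open Finset

variable {α : Type*}

theorem Set.ncard_le_card_of_pairwiseDisjoint [Fintype α] {S : Set (Finset α)}
    (hdisj : S.PairwiseDisjoint id) (hne : ∀ X ∈ S, X.Nonempty) :
    S.ncard ≤ Fintype.card α := by
  classical
  have hS : S.Finite := S.toFinite
  rw [Set.ncard_eq_toFinset_card S hS]
  calc #hS.toFinset ≤ #(hS.toFinset.biUnion id) :=
        card_le_card_biUnion (by simpa using hdisj) (by simpa using hne)
    _ ≤ Fintype.card α := card_le_univ _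

/-- Posimodularity of a symmetric crossing submodular function. -/
theorem sdiff_add_sdiff_le_of_crossing [Fintype α] [DecidableEq α] {f : Finset α → ℝ}
    (hsym : ∀ A : Finset α, f A = f Aᶜ)
    (hcross : ∀ A B : Finset α,
      (A \ B).Nonempty → (B \ A).Nonempty → (A ∩ B).Nonempty → ((A ∪ B)ᶜ).Nonempty →
      f (A ∪ B) + f (A ∩ B) ≤ f A + f B)
    {X Y : Finset α} (hXY : (X \ Y).Nonempty) (hYX : (Y \ X).Nonempty)
    (hinter : (X ∩ Y).Nonempty) (hcover : ((X ∪ Y)ᶜ).Nonempty) :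
    f (X \ Y) + f (Y \ X) ≤ f X + f Y := by
  have e1 : X \ Yᶜ = X ∩ Y := by ext; simp
  have e2 : Yᶜ \ X = (X ∪ Y)ᶜ := by ext; simp [and_comm]
  have e3 : X ∩ Yᶜ = X \ Y := by ext; simp
  have e4 : (X ∪ Yᶜ)ᶜ = Y \ X := by ext; simp [and_comm]
  have h := hcross X Yᶜ (e1 ▸ hinter) (e2 ▸ hcover) (e3 ▸ hXY) (e4 ▸ hYX)
  rw [e3, hsym (X ∪ Yᶜ), e4, ← hsym Y] at h
  linarith

def IsMinimalOptimal (f : Finset α → ℝ) (I : Finset α → Prop) (X : Finset α) : Prop :=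
  X.Nonempty ∧ I X ∧
    (∀ A : Finset α, A.Nonempty → I A → f X ≤ f A) ∧
    (∀ Z : Finset α, Z.Nonempty → Z ⊂ X → I Z → f Z ≠ f X)

namespace IsMinimalOptimal

variable {f : Finset α → ℝ} {I : Finset α → Prop} {X Y Z : Finset α}

theorem le (hX : IsMinimalOptimal f I X) (hZ : Z.Nonempty) (hIZ : I Z) : f X ≤ f Z :=
  hX.2.2.1 Z hZ hIZ

theorem lt_of_ssubset (hX : IsMinimalOptimal f I X)
    (hhered : ∀ A B : Finset α, I B → A ⊆ B → I A) (hZ : Z.Nonempty) (hZX : Z ⊂ X) :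
    f X < f Z := by
  have hIZ : I Z := hhered Z X hX.2.1 hZX.subset
  exact lt_of_le_of_ne (hX.le hZ hIZ) (hX.2.2.2 Z hZ hZX hIZ).symm

theorem disjoint [Fintype α] [DecidableEq α]
    (hsym : ∀ A : Finset α, f A = f Aᶜ)
    (hcross : ∀ A B : Finset α,
      (A \ B).Nonempty → (B \ A).Nonempty → (A ∩ B).Nonempty → ((A ∪ B)ᶜ).Nonempty →
      f (A ∪ B) + f (A ∩ B) ≤ f A + f B)
    (hhered : ∀ A B : Finset α, I B → A ⊆ B → I A) (hnontriv : ¬ I Finset.univ)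
    (hX : IsMinimalOptimal f I X) (hY : IsMinimalOptimal f I Y) (hne : X ≠ Y) :
    Disjoint X Y := by
  rw [disjoint_iff_inter_eq_empty, ← not_nonempty_iff_eq_empty]
  intro hinter
  have hXY : f X ≤ f Y := hX.le hY.1 hY.2.1
  have hYX : f Y ≤ f X := hY.le hX.1 hX.2.1
  have hXdY : (X \ Y).Nonempty := sdiff_nonempty.mpr fun hsub =>
    (hY.lt_of_ssubset hhered hX.1 (hsub.ssubset_of_ne hne)).not_ge hXY
  have hYdX : (Y \ X).Nonempty := sdiff_nonempty.mpr fun hsub =>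
    (hX.lt_of_ssubset hhered hY.1 (hsub.ssubset_of_ne hne.symm)).not_ge hYX
  by_cases hcover : ((X ∪ Y)ᶜ).Nonempty
  · have hposi := sdiff_add_sdiff_le_of_crossing hsym hcross hXdY hYdX hinter hcover
    have hX_lt : f X < f (X \ Y) :=
      hX.lt_of_ssubset hhered hXdY
        (sdiff_inter_self_left X Y ▸ sdiff_ssubset inter_subset_left hinter)
    have hY_le : f Y ≤ f (Y \ X) := hY.le hYdX (hhered _ Y hY.2.1 sdiff_subset)
    linarith
  · have hXcY : Xᶜ ⊆ Y := fun a ha => by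
      by_contra haY
      exact hcover ⟨a, by simpa [mem_compl.mp ha] using haY⟩
    have hXc : Xᶜ.Nonempty := by
      rw [← compl_ne_univ_iff_nonempty, compl_compl]
      rintro rfl
      exact hnontriv hX.2.1
    have hXcY' : Xᶜ ≠ Y := by
      rintro rfl
      simp at hinter
    have := hY.lt_of_ssubset hhered hXc (hXcY.ssubset_of_ne hXcY')
    rw [← hsym] at this
    linarith

end IsMinimalOptimal

end

theorem card_minimal_optimal_solutions_le_general
    {α : Type*} [Fintype α] [DecidableEq α] (f : Finset α → ℝ)
    (hsym : ∀ A : Finset α, f A = f Aᶜ)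
    (hcross : ∀ A B : Finset α,
      (A \ B).Nonempty → (B \ A).Nonempty → (A ∩ B).Nonempty → ((A ∪ B)ᶜ).Nonempty →
      f (A ∪ B) + f (A ∩ B) ≤ f A + f B)
    (I : Finset α → Prop)
    (hhered : ∀ A B : Finset α, I B → A ⊆ B → I A)
    (hnontriv : ¬ I Finset.univ) :
    {X : Finset α | X.Nonempty ∧ I X ∧
      (∀ A : Finset α, A.Nonempty → I A → f X ≤ f A) ∧
      (∀ Z : Finset α, Z.Nonempty → Z ⊂ X → I Z → f Z ≠ f X)}.ncard ≤
      Fintype.card α := by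
  change {X | IsMinimalOptimal f I X}.ncard ≤ Fintype.card α
  exact Set.ncard_le_card_of_pairwiseDisjoint
    (fun X hX Y hY hne => hX.disjoint hsym hcross hhered hnontriv hY hne)
    (fun X hX => hX.1)

/-- The number of minimal optimal solutions of the hereditary minimization
problem is at most `|V|`. -/
theorem card_minimal_optimal_solutions_le
    {α : Type*} [Fintype α] [DecidableEq α] (f : Finset α → ℝ)
    (hcard : 2 ≤ Fintype.card α)
    (hsym : ∀ A : Finset α, f A = f Aᶜ)
    (hcross : ∀ A B : Finset α,
      (A \ B).Nonempty → (B \ A).Nonempty → (A ∩ B).Nonempty → ((A ∪ B)ᶜ).Nonempty →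
      f (A ∪ B) + f (A ∩ B) ≤ f A + f B)
    (I : Finset α → Prop)
    (hhered : ∀ A B : Finset α, I B → A ⊆ B → I A)
    (hnontriv : ¬ I Finset.univ)
    (hne : ∃ A : Finset α, A.Nonempty ∧ I A) :
    {X : Finset α | X.Nonempty ∧ I X ∧
      (∀ A : Finset α, A.Nonempty → I A → f X ≤ f A) ∧
      (∀ Z : Finset α, Z.Nonempty → Z ⊂ X → I Z → f Z ≠ f X)}.ncard ≤
      Fintype.card α :=
  card_minimal_optimal_solutions_le_general f hsym hcross I hhered hnontriv
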